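/- arXiv:1109.1790 — 4 statements merged into one kernel-verified Lean document; each statement's English description precedes it below -/
import Mathlib

section
/- (Routh–Hurwitz criterion) Let p(z) = b₀zⁿ + b₁z^{n−1} + ⋯ + b_{n−1}z + b_n be a polynomial of degree n ≥ 1 with real coefficients and positive leading coefficient b₀ > 0. Then every complex root of p has negative real part if and only if all the Hurwitz determinants of p are positive: Δ_k > 0 for every k = 1, …, n. -/
/-- The `k`-th Hurwitz determinant of a real polynomial `p` of degree `n`:
the determinant of the `k × k` matrix whose `(i, j)` entry (1-based indices)
is `b_{2j - i}`, where `b_m` is the coefficient of `z^(n - m)` in `p`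
(with the convention `b_m = 0` for `m < 0` or `m > n`). -/
noncomputable def hurwitzDet (p : Polynomial ℝ) (k : ℕ) : ℝ :=
  Matrix.det (Matrix.of fun i j : Fin k =>
    if 0 ≤ 2 * (j : ℤ) - (i : ℤ) + 1 ∧ 2 * (j : ℤ) - (i : ℤ) + 1 ≤ (p.natDegree : ℤ)
    then p.coeff (p.natDegree - (2 * (j : ℤ) - (i : ℤ) + 1).toNat)
    else 0)

/-!
Write `p = E + O`, where `O` collects the terms `b_m z ^ (n - m)` with `m` odd. Every root factor
satisfies `|-z̄ - r| < |z - r|` when `Re z > 0 > Re r`, so for stable `p` we get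
`|p(-z)| < |p(z)|` on the right half-plane, i.e. `Re (E(z) · conj O(z)) > 0` there: `E / O` is a
positive real function. Hence the zeros of `O` lie on the imaginary axis, are simple, and `E / O`
has positive residues at them. Routh's step `q = p - (b₀ / b₁) z O` removes the pole of `E / O`
at infinity, so by Lagrange interpolation at the zeros of `O` the function `(q - O) / O` is a
positive combination of the `1 / (z - r)`, and `Re ((q - O) · conj O) ≥ 0` on the right
half-plane. The same inequality follows directly from stability of `q = (q - O) + O`, and either
way it excludes zeros of `p` and of `q` with `Re z ≥ 0`. So `p` is stable iff `q` is. As `q` has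
degree `n - 1` and row operations give `Δ_{k+1}(p) = b₁ Δ_k(q)`, induction on the degree proves
the criterion; the condition `b₁ > 0` is necessary because `b₁ / b₀` is minus the sum of the
roots.
-/

open Polynomial ComplexConjugate
open scoped ComplexOrder

namespace RouthHurwitz

section Matrix

variable {R : Type*} [CommRing R]

/-- With 0-based indices, the entry `b_{2j-i}` of the Hurwitz matrix becomes `b (2j - i + 1)`. -/
def hurwitzMatrix (b : ℤ → R) (k : ℕ) : Matrix (Fin k) (Fin k) R :=
  Matrix.of fun i j => b (2 * (j : ℤ) - (i : ℤ) + 1)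

def routhShift (b : ℤ → R) (c : R) (m : ℤ) : R :=
  b (m + 1) - if Odd m then c * b (m + 2) else 0

def routhRowOp (c : R) (k : ℕ) : Matrix (Fin k) (Fin k) R :=
  Matrix.of fun i l => if l = i then 1 else if Odd (i : ℕ) ∧ (l : ℕ) + 1 = i then -c else 0

lemma det_routhRowOp (c : R) (k : ℕ) : (routhRowOp c k).det = 1 := by
  have hlower : (routhRowOp c k).BlockTriangular OrderDual.toDual := by
    intro i l hil
    have : (i : ℕ) < l := hil
    simp only [routhRowOp, Matrix.of_apply]
    rw [if_neg (by rintro rfl; omega), if_neg (by omega)]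
  rw [Matrix.det_of_isLowerTriangular _ hlower]
  exact Finset.prod_eq_one fun i _ => by simp [routhRowOp]

lemma routhRowOp_mul_hurwitzMatrix (b : ℤ → R) (c : R) (k : ℕ) (i j : Fin k) :
    (routhRowOp c k * hurwitzMatrix b k) i j = routhShift b c (2 * (j : ℤ) - (i : ℤ)) := by
  have hodd : Odd (2 * (j : ℤ) - (i : ℤ)) ↔ Odd (i : ℕ) := by
    simp only [Int.odd_iff, Nat.odd_iff]; omega
  simp only [Matrix.mul_apply, routhRowOp, hurwitzMatrix, Matrix.of_apply, routhShift, hodd]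
  split_ifs with hi
  · obtain ⟨l, hl⟩ : ∃ l : Fin k, (l : ℕ) + 1 = i := ⟨⟨i - 1, by omega⟩, by
      simp only; have := hi.pos; omega⟩
    rw [Finset.sum_eq_add_of_mem i l (Finset.mem_univ _) (Finset.mem_univ _)
      (by rintro rfl; omega) (fun l' _ h => by simp [h.1, show ¬ (l' : ℕ) + 1 = i by omega])]
    simp [hi, hl, show l ≠ i by rintro rfl; omega, show (l : ℤ) = i - 1 by omega]
    ring_nf
  · rw [Finset.sum_eq_single i (fun l _ hl => by simp [hl, hi]) (by simp)]
    simp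

lemma routhShift_neg_succ (b : ℤ → R) (c : R) (hneg : ∀ m < 0, b m = 0) (h0 : b 0 = c * b 1)
    (i : ℕ) : routhShift b c (-(i + 1)) = 0 := by
  rcases i with _ | i
  · simp [routhShift, h0]
  · have hodd : Odd (-((i + 1 : ℕ) + 1 : ℤ)) → -((i + 1 : ℕ) + 1 : ℤ) + 2 < 0 := by
      simp only [Int.odd_iff]; omega
    simp only [routhShift]
    split_ifs with h
    · rw [hneg _ (by omega), hneg _ (hodd h), mul_zero, sub_zero]
    · rw [hneg _ (by omega), sub_zero]

theorem det_hurwitzMatrix_succ (b : ℤ → R) (c : R) (hneg : ∀ m < 0, b m = 0)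
    (h0 : b 0 = c * b 1) (k : ℕ) :
    (hurwitzMatrix b (k + 1)).det = b 1 * (hurwitzMatrix (routhShift b c) k).det := by
  rw [← one_mul (hurwitzMatrix b (k + 1)).det, ← det_routhRowOp c (k + 1), ← Matrix.det_mul,
    Matrix.det_succ_column_zero, Fin.sum_univ_succ, Finset.sum_eq_zero]
  · have hsub : (routhRowOp c (k + 1) * hurwitzMatrix b (k + 1)).submatrix Fin.succ Fin.succ
        = hurwitzMatrix (routhShift b c) k := by
      ext i j
      rw [Matrix.submatrix_apply, routhRowOp_mul_hurwitzMatrix]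
      simp only [hurwitzMatrix, Matrix.of_apply, Fin.val_succ]
      push_cast; ring_nf
    simp [routhRowOp_mul_hurwitzMatrix, hsub, routhShift]
  · intro i _
    have harg : 2 * ((0 : Fin (k + 1)) : ℤ) - (i.succ : ℤ) = -((i : ℕ) + 1) := by simp
    rw [routhRowOp_mul_hurwitzMatrix, harg, routhShift_neg_succ b c hneg h0, mul_zero, zero_mul]

end Matrix

section Coefficients

variable {R : Type*} [Semiring R]

noncomputable def coeffInt (p : R[X]) (j : ℤ) : R := if 0 ≤ j then p.coeff j.toNat else 0

@[simp] lemma coeffInt_natCast (p : R[X]) (k : ℕ) : coeffInt p k = p.coeff k := by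
  simp [coeffInt]

lemma coeffInt_of_neg (p : R[X]) {j : ℤ} (hj : j < 0) : coeffInt p j = 0 := by
  simp [coeffInt, not_le.2 hj]

lemma coeffInt_of_natDegree_lt (p : R[X]) {j : ℤ} (hj : (p.natDegree : ℤ) < j) :
    coeffInt p j = 0 := by
  lift j to ℕ using by omega
  exact coeff_eq_zero_of_natDegree_lt (by omega)

lemma coeffInt_sub {R : Type*} [Ring R] (p q : R[X]) (j : ℤ) :
    coeffInt (p - q) j = coeffInt p j - coeffInt q j := by
  simp only [coeffInt]; split_ifs <;> simp

lemma coeffInt_C_mul (a : R) (p : R[X]) (j : ℤ) : coeffInt (C a * p) j = a * coeffInt p j := by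
  simp only [coeffInt]; split_ifs <;> simp

lemma coeffInt_X_mul (p : R[X]) (j : ℤ) : coeffInt (X * p) j = coeffInt p (j - 1) := by
  rcases lt_trichotomy j 0 with hj | rfl | hj
  · rw [coeffInt_of_neg _ hj, coeffInt_of_neg _ (by omega)]
  · rw [coeffInt_of_neg p (by norm_num : (0 : ℤ) - 1 < 0), ← Nat.cast_zero, coeffInt_natCast]
    simp
  · obtain ⟨k, rfl⟩ : ∃ k : ℕ, j = k + 1 := ⟨(j - 1).toNat, by omega⟩
    rw [add_sub_cancel_right, ← Nat.cast_succ, coeffInt_natCast, coeffInt_natCast, coeff_X_mul]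

noncomputable def hurwitzCoeff (p : R[X]) (m : ℤ) : R := coeffInt p (p.natDegree - m)

lemma hurwitzCoeff_eq_ite (p : R[X]) (m : ℤ) : hurwitzCoeff p m =
    if 0 ≤ m ∧ m ≤ p.natDegree then p.coeff (p.natDegree - m.toNat) else 0 := by
  simp only [hurwitzCoeff]
  split_ifs with hm
  · lift m to ℕ using hm.1
    rw [show (p.natDegree : ℤ) - m = ((p.natDegree - m : ℕ) : ℤ) by omega]
    simp
  · rcases not_and_or.1 hm with hm | hm
    · exact coeffInt_of_natDegree_lt _ (by omega)
    · exact coeffInt_of_neg _ (by omega)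

lemma hurwitzDet_eq_det_hurwitzMatrix (p : ℝ[X]) (k : ℕ) :
    hurwitzDet p k = (hurwitzMatrix (hurwitzCoeff p) k).det := by
  simp only [hurwitzDet, hurwitzMatrix, hurwitzCoeff_eq_ite]

lemma hurwitzDet_one (p : ℝ[X]) (hp : 1 ≤ p.natDegree) :
    hurwitzDet p 1 = p.coeff (p.natDegree - 1) := by
  rw [hurwitzDet_eq_det_hurwitzMatrix, Matrix.det_fin_one]
  simp [hurwitzMatrix, hurwitzCoeff,
    show (p.natDegree : ℤ) - 1 = ((p.natDegree - 1 : ℕ) : ℤ) by omega]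

end Coefficients

section Reduction

variable {K : Type*} [Field K]

/-- The terms `b_m z ^ (n - m)` of `p` with odd `m`. -/
noncomputable def hurwitzOddPart (p : K[X]) : K[X] :=
  ∑ j ∈ p.support with Odd (p.natDegree + j), monomial j (p.coeff j)

lemma coeff_hurwitzOddPart (p : K[X]) (j : ℕ) :
    (hurwitzOddPart p).coeff j = if Odd (p.natDegree + j) then p.coeff j else 0 := by
  simp only [hurwitzOddPart, finsetSum_coeff, coeff_monomial, Finset.sum_ite_eq',
    Finset.mem_filter, mem_support_iff]
  by_cases hj : p.coeff j = 0 <;> simp [hj]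

lemma coeffInt_hurwitzOddPart (p : K[X]) (j : ℤ) : coeffInt (hurwitzOddPart p) j =
    if Odd ((p.natDegree : ℤ) + j) then coeffInt p j else 0 := by
  rcases lt_or_ge j 0 with hj | hj
  · simp [coeffInt_of_neg _ hj]
  · lift j to ℕ using hj
    simp only [coeffInt_natCast, coeff_hurwitzOddPart, ← Nat.cast_add, Int.odd_coe_nat]

lemma coeff_hurwitzOddPart_natDegree_pred (p : K[X]) (hp : 1 ≤ p.natDegree) :
    (hurwitzOddPart p).coeff (p.natDegree - 1) = p.coeff (p.natDegree - 1) := by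
  rw [coeff_hurwitzOddPart, if_pos (by simp only [Nat.odd_iff]; omega)]

lemma coeff_hurwitzOddPart_of_natDegree_le (p : K[X]) {j : ℕ} (hj : p.natDegree ≤ j) :
    (hurwitzOddPart p).coeff j = 0 := by
  rw [coeff_hurwitzOddPart]
  split_ifs with h
  · exact coeff_eq_zero_of_natDegree_lt (by simp only [Nat.odd_iff] at h; omega)
  · rfl

lemma natDegree_hurwitzOddPart (p : K[X]) (hp : 1 ≤ p.natDegree)
    (hb : p.coeff (p.natDegree - 1) ≠ 0) : (hurwitzOddPart p).natDegree = p.natDegree - 1 := by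
  refine natDegree_eq_of_le_of_coeff_ne_zero ?_ (by rwa [coeff_hurwitzOddPart_natDegree_pred p hp])
  exact natDegree_le_iff_coeff_eq_zero.2 fun j hj =>
    coeff_hurwitzOddPart_of_natDegree_le p (by omega)

lemma hurwitzOddPart_ne_zero (p : K[X]) (hp : 1 ≤ p.natDegree)
    (hb : p.coeff (p.natDegree - 1) ≠ 0) : hurwitzOddPart p ≠ 0 := fun h => hb <| by
  rw [← coeff_hurwitzOddPart_natDegree_pred p hp, h, coeff_zero]

noncomputable def routhReduce (p : K[X]) : K[X] :=
  p - C (p.leadingCoeff / p.coeff (p.natDegree - 1)) * (X * hurwitzOddPart p)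

lemma coeffInt_routhReduce (p : K[X]) (j : ℤ) : coeffInt (routhReduce p) j =
    coeffInt p j - p.leadingCoeff / p.coeff (p.natDegree - 1) *
      if Odd ((p.natDegree : ℤ) + (j - 1)) then coeffInt p (j - 1) else 0 := by
  rw [routhReduce, coeffInt_sub, coeffInt_C_mul, coeffInt_X_mul, coeffInt_hurwitzOddPart]

lemma coeff_routhReduce_natDegree_pred (p : K[X]) (hp : 1 ≤ p.natDegree) :
    (routhReduce p).coeff (p.natDegree - 1) = p.coeff (p.natDegree - 1) := by
  have hodd : ¬ Odd ((p.natDegree : ℤ) + (((p.natDegree - 1 : ℕ) : ℤ) - 1)) := by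
    simp only [Int.odd_iff]; omega
  simpa [hodd] using coeffInt_routhReduce p (p.natDegree - 1 : ℕ)

lemma coeff_routhReduce_of_natDegree_le (p : K[X]) (hp : 1 ≤ p.natDegree)
    (hb : p.coeff (p.natDegree - 1) ≠ 0) {j : ℕ} (hj : p.natDegree ≤ j) :
    (routhReduce p).coeff j = 0 := by
  have h := coeffInt_routhReduce p j
  rw [coeffInt_natCast] at h
  rw [h]
  rcases hj.eq_or_lt with rfl | hj
  · have hodd : Odd ((p.natDegree : ℤ) + (p.natDegree - 1)) := by
      simp only [Int.odd_iff]; omega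
    rw [if_pos hodd, show (p.natDegree : ℤ) - 1 = ((p.natDegree - 1 : ℕ) : ℤ) by omega,
      coeffInt_natCast, coeffInt_natCast, div_mul_cancel₀ _ hb, coeff_natDegree, sub_self]
  · rw [coeffInt_natCast, coeff_eq_zero_of_natDegree_lt hj, zero_sub, neg_eq_zero]
    rcases (Nat.le_sub_one_of_lt hj).eq_or_lt with h | h
    · rw [if_neg (by simp only [Int.odd_iff]; omega), mul_zero]
    · rw [coeffInt_of_natDegree_lt _ (by omega), ite_self, mul_zero]

lemma natDegree_routhReduce (p : K[X]) (hp : 1 ≤ p.natDegree)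
    (hb : p.coeff (p.natDegree - 1) ≠ 0) : (routhReduce p).natDegree = p.natDegree - 1 := by
  refine natDegree_eq_of_le_of_coeff_ne_zero ?_ (by rwa [coeff_routhReduce_natDegree_pred p hp])
  exact natDegree_le_iff_coeff_eq_zero.2 fun j hj =>
    coeff_routhReduce_of_natDegree_le p hp hb (by omega)

lemma hurwitzCoeff_routhReduce (p : K[X]) (hp : 1 ≤ p.natDegree)
    (hb : p.coeff (p.natDegree - 1) ≠ 0) :
    hurwitzCoeff (routhReduce p) =
      routhShift (hurwitzCoeff p) (p.leadingCoeff / p.coeff (p.natDegree - 1)) := by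
  ext m
  have hodd : Odd ((p.natDegree : ℤ) + ((p.natDegree - 1) - m - 1)) ↔ Odd m := by
    simp only [Int.odd_iff]; omega
  rw [hurwitzCoeff, natDegree_routhReduce p hp hb, Nat.cast_sub hp, Nat.cast_one,
    coeffInt_routhReduce, routhShift, hurwitzCoeff, hurwitzCoeff]
  simp only [hodd]
  split_ifs <;> ring_nf

lemma degree_routhReduce_sub_hurwitzOddPart_lt (p : K[X]) (hp : 1 ≤ p.natDegree)
    (hb : p.coeff (p.natDegree - 1) ≠ 0) :
    (routhReduce p - hurwitzOddPart p).degree < (hurwitzOddPart p).degree := by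
  rw [degree_eq_natDegree (hurwitzOddPart_ne_zero p hp hb), natDegree_hurwitzOddPart p hp hb,
    degree_lt_iff_coeff_zero]
  intro j hj
  rw [coeff_sub]
  rcases hj.eq_or_lt with rfl | hj
  · rw [coeff_routhReduce_natDegree_pred p hp, coeff_hurwitzOddPart_natDegree_pred p hp, sub_self]
  · rw [coeff_routhReduce_of_natDegree_le p hp hb (by omega),
      coeff_hurwitzOddPart_of_natDegree_le p (by omega), sub_self]

theorem hurwitzDet_succ (p : ℝ[X]) (hp : 1 ≤ p.natDegree) (hb : p.coeff (p.natDegree - 1) ≠ 0)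
    (k : ℕ) :
    hurwitzDet p (k + 1) = p.coeff (p.natDegree - 1) * hurwitzDet (routhReduce p) k := by
  have hb1 : hurwitzCoeff p 1 = p.coeff (p.natDegree - 1) := by
    rw [hurwitzCoeff, show (p.natDegree : ℤ) - 1 = ((p.natDegree - 1 : ℕ) : ℤ) by omega,
      coeffInt_natCast]
  have hb0 : hurwitzCoeff p 0 = p.leadingCoeff / p.coeff (p.natDegree - 1) * hurwitzCoeff p 1 := by
    rw [hb1, div_mul_cancel₀ _ hb, hurwitzCoeff, sub_zero, coeffInt_natCast, coeff_natDegree]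
  rw [hurwitzDet_eq_det_hurwitzMatrix, hurwitzDet_eq_det_hurwitzMatrix,
    det_hurwitzMatrix_succ (hurwitzCoeff p) _
      (fun m hm => coeffInt_of_natDegree_lt p (by omega)) hb0, hb1,
    hurwitzCoeff_routhReduce p hp hb]

lemma forall_hurwitzDet_pos_iff_routhReduce (p : ℝ[X]) (hp : 1 ≤ p.natDegree)
    (hb : 0 < p.coeff (p.natDegree - 1)) :
    (∀ k, 1 ≤ k → k ≤ p.natDegree → 0 < hurwitzDet p k) ↔
      ∀ k, 1 ≤ k → k ≤ p.natDegree - 1 → 0 < hurwitzDet (routhReduce p) k := by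
  constructor
  · intro h k hk1 hk2
    have := h (k + 1) (by omega) (by omega)
    rw [hurwitzDet_succ p hp hb.ne'] at this
    exact pos_of_mul_pos_right this hb.le
  · intro h k hk1 hk2
    obtain ⟨j, rfl⟩ : ∃ j, k = j + 1 := ⟨k - 1, by omega⟩
    rw [hurwitzDet_succ p hp hb.ne']
    rcases Nat.eq_zero_or_pos j with rfl | hj
    · simpa [hurwitzDet] using hb
    · exact mul_pos hb (h j hj (by omega))

end Reduction

section PositiveReal

open Complex Lagrange

lemma re_mul_exp_neg_mul_I (B : ℂ) (φ : ℝ) :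
    (B * exp (-(φ * I))).re = B.re * Real.cos φ + B.im * Real.sin φ := by
  simp [Complex.mul_re, Complex.exp_re, Complex.exp_im]

lemma eq_one_and_pos_of_re_mul_exp_nonneg {B : ℂ} (hB : B ≠ 0) {m : ℕ} (hm : m ≠ 0)
    (h : ∀ θ ∈ Set.Icc (-(Real.pi / 2)) (Real.pi / 2), 0 ≤ (B * exp (-(m * θ * I))).re) :
    m = 1 ∧ 0 < B := by
  have hpi := Real.pi_pos
  have hmR : (1 : ℝ) ≤ m := by exact_mod_cast Nat.one_le_iff_ne_zero.2 hm
  have hg : ∀ φ : ℝ, |φ| ≤ m * (Real.pi / 2) →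
      0 ≤ B.re * Real.cos φ + B.im * Real.sin φ := by
    intro φ hφ
    have hθ : φ / m ∈ Set.Icc (-(Real.pi / 2)) (Real.pi / 2) := by
      rw [Set.mem_Icc, ← abs_le, abs_div, Nat.abs_cast, div_le_iff₀ (by positivity)]
      linarith
    have := h _ hθ
    rwa [← Complex.ofReal_natCast, ← Complex.ofReal_mul, mul_div_cancel₀ _ (by positivity),
      re_mul_exp_neg_mul_I] at this
  have hre : 0 ≤ B.re := by simpa using hg 0 (by simp; positivity)
  have him : B.im = 0 := by
    have h1 := hg (Real.pi / 2) (by rw [abs_of_pos (by positivity)]; nlinarith)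
    have h2 := hg (-(Real.pi / 2)) (by rw [abs_neg, abs_of_pos (by positivity)]; nlinarith)
    simp at h1 h2
    linarith
  have hre_pos : 0 < B.re := hre.lt_of_ne fun h => hB (Complex.ext h.symm him)
  refine ⟨?_, Complex.pos_iff.2 ⟨hre_pos, him.symm⟩⟩
  by_contra hm1
  have h2 : (2 : ℝ) ≤ m := by exact_mod_cast (show 2 ≤ m by omega)
  have := hg Real.pi (by rw [abs_of_pos hpi]; nlinarith)
  simp at this
  linarith

/-- Along the ray `z₀ + ε e^{iθ}`, the product in `h` is `ε ^ m` times the one in the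
conclusion; let `ε → 0⁺`. -/
lemma re_mul_conj_mul_exp_nonneg_of_mem_Ioo {F G : ℂ[X]} {z₀ : ℂ} {m : ℕ}
    (h : ∀ w : ℂ, z₀.re < w.re →
      0 ≤ (F.eval w * conj (((X - C z₀) ^ m * G).eval w)).re)
    {θ : ℝ} (hθ : θ ∈ Set.Ioo (-(Real.pi / 2)) (Real.pi / 2)) :
    0 ≤ (F.eval z₀ * conj (G.eval z₀) * exp (-(m * θ * I))).re := by
  set u := exp (θ * I)
  have hu : 0 < u.re := by
    simpa [u, Complex.exp_re] using Real.cos_pos_of_mem_Ioo hθ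
  have hconj : conj u ^ m = exp (-(m * θ * I)) := by
    rw [← Complex.exp_conj, ← Complex.exp_nat_mul]
    congr 1
    simp only [map_mul, Complex.conj_ofReal, Complex.conj_I]
    ring
  let φ : ℝ → ℝ := fun ε =>
    (F.eval (z₀ + ε * u) * conj (G.eval (z₀ + ε * u)) * exp (-(m * θ * I))).re
  have hφ : Continuous φ := by fun_prop
  have hpos : ∀ ε ∈ Set.Ioi (0 : ℝ), 0 ≤ φ ε := by
    intro ε hε
    have hε : 0 < ε := hε
    have hw := h (z₀ + ε * u) (by simp [Complex.add_re]; positivity)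
    have hid : F.eval (z₀ + ε * u) * conj (((X - C z₀) ^ m * G).eval (z₀ + ε * u)) =
        ((ε ^ m : ℝ) : ℂ) * (F.eval (z₀ + ε * u) * conj (G.eval (z₀ + ε * u)) *
          exp (-(m * θ * I))) := by
      rw [← hconj]
      simp only [eval_mul, eval_pow, eval_sub, eval_X, eval_C, add_sub_cancel_left, map_mul,
        map_pow, Complex.conj_ofReal]
      push_cast
      ring
    rw [hid, Complex.re_ofReal_mul] at hw
    exact nonneg_of_mul_nonneg_right hw (by positivity)
  have := ge_of_tendsto ((hφ.tendsto 0).mono_left nhdsWithin_le_nhds)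
    (eventually_nhdsWithin_of_forall hpos)
  simpa [φ] using this

lemma re_mul_conj_mul_exp_nonneg {F G : ℂ[X]} {z₀ : ℂ} {m : ℕ}
    (h : ∀ w : ℂ, z₀.re < w.re →
      0 ≤ (F.eval w * conj (((X - C z₀) ^ m * G).eval w)).re) :
    ∀ θ ∈ Set.Icc (-(Real.pi / 2)) (Real.pi / 2),
      0 ≤ (F.eval z₀ * conj (G.eval z₀) * exp (-(m * θ * I))).re := by
  have hψ : Continuous fun θ : ℝ =>
      (F.eval z₀ * conj (G.eval z₀) * exp (-(m * θ * I))).re := by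
    fun_prop
  intro θ hθ
  rw [← closure_Ioo (by linarith [Real.pi_pos])] at hθ
  exact closure_minimal (fun θ hθ => re_mul_conj_mul_exp_nonneg_of_mem_Ioo h hθ)
    (isClosed_le continuous_const hψ) hθ

theorem eq_one_and_pos_of_re_mul_conj_nonneg {F G : ℂ[X]} {z₀ : ℂ} {m : ℕ} (hm : m ≠ 0)
    (hF : F.eval z₀ ≠ 0) (hG : G.eval z₀ ≠ 0)
    (h : ∀ w : ℂ, z₀.re < w.re →
      0 ≤ (F.eval w * conj (((X - C z₀) ^ m * G).eval w)).re) :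
    m = 1 ∧ 0 < F.eval z₀ * conj (G.eval z₀) :=
  eq_one_and_pos_of_re_mul_exp_nonneg (mul_ne_zero hF ((_root_.map_ne_zero _).2 hG)) hm
    (re_mul_conj_mul_exp_nonneg h)

lemma re_mul_inv_sub_nonneg {q w r : ℂ} (hq : 0 < q) (hw : 0 < w.re) (hr : r.re = 0) :
    0 ≤ (q * (w - r)⁻¹).re := by
  obtain ⟨hqre, hqim⟩ := Complex.pos_iff.1 hq
  rw [Complex.mul_re, ← hqim, zero_mul, sub_zero, Complex.inv_re, Complex.sub_re, hr, sub_zero]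
  exact mul_nonneg hqre.le (div_nonneg hw.le (Complex.normSq_nonneg _))

theorem re_mul_eval_mul_conj_eval_nodal_nonneg {s : Finset ℂ} {F : ℂ[X]} {c : ℂ}
    (hdeg : F.degree < s.card) (hs : ∀ r ∈ s, r.re = 0)
    (hpos : ∀ r ∈ s, 0 < c * nodalWeight s id r * F.eval r) {w : ℂ} (hw : 0 < w.re) :
    0 ≤ (c * F.eval w * conj ((nodal s id).eval w)).re := by
  have hnode : ∀ r ∈ s, w ≠ id r := fun r hr h => by simp [h, hs r hr] at hw
  rw [eq_interpolate_of_eval_eq (v := id) (fun r => F.eval r) (Set.injOn_id _) hdeg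
    (fun _ _ => rfl), eval_interpolate_not_at_node _ hnode,
    show ∀ N S : ℂ, c * (N * S) * conj N = N * conj N * (c * S) from fun _ _ => by ring,
    Complex.mul_conj, Complex.re_ofReal_mul, Finset.mul_sum, Complex.re_sum]
  refine mul_nonneg (Complex.normSq_nonneg _) (Finset.sum_nonneg fun r hr => ?_)
  rw [show c * (nodalWeight s id r * (w - id r)⁻¹ * F.eval r) =
    c * nodalWeight s id r * F.eval r * (w - r)⁻¹ by simp only [id]; ring]
  exact re_mul_inv_sub_nonneg (hpos r hr) hw (hs r hr)

lemma eq_C_leadingCoeff_mul_nodal {K : Type*} [Field K] [IsAlgClosed K] [DecidableEq K] {G : K[X]}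
    (hG : G.roots.Nodup) : G = C G.leadingCoeff * nodal G.roots.toFinset id := by
  conv_lhs =>
    rw [← C_leadingCoeff_mul_prod_multiset_X_sub_C (p := G) IsAlgClosed.card_roots_eq_natDegree]
  rw [nodal, Finset.prod_eq_multiset_prod, Multiset.toFinset_val, hG.dedup]
  rfl

lemma nodup_roots_of_re_mul_conj_nonneg {F G : ℂ[X]} (hG : G ≠ 0)
    (hFG : ∀ w : ℂ, 0 < w.re → 0 ≤ (F.eval w * conj (G.eval w)).re)
    (hroots : ∀ r, G.IsRoot r → r.re = 0 ∧ F.eval r ≠ 0) : G.roots.Nodup := by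
  classical
  refine Multiset.nodup_iff_count_le_one.2 fun r => ?_
  rw [count_roots]
  by_cases hr : G.IsRoot r
  · obtain ⟨hre, hF⟩ := hroots r hr
    refine (eq_one_and_pos_of_re_mul_conj_nonneg ((rootMultiplicity_pos hG).2 hr).ne' hF
      (eval_divByMonic_pow_rootMultiplicity_ne_zero r hG) ?_).1.le
    rw [pow_mul_divByMonic_rootMultiplicity_eq, hre]
    exact hFG
  · rw [rootMultiplicity_eq_zero hr]
    exact zero_le_one

lemma conj_mul_nodalWeight_mul_pos {s : Finset ℂ} {r a y : ℂ}
    (hpos : 0 < y * conj ((C a * nodal (s.erase r) id).eval r)) :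
    0 < conj a * nodalWeight s id r * y := by
  have hN : (nodal (s.erase r) id).eval r ≠ 0 :=
    eval_nodal_not_at_node fun j hj => (Finset.ne_of_mem_erase hj).symm
  have hweight : conj a * nodalWeight s id r * y = y * conj ((C a * nodal (s.erase r) id).eval r) *
      ((Complex.normSq ((nodal (s.erase r) id).eval r))⁻¹ : ℝ) := by
    have hN' : conj ((nodal (s.erase r) id).eval r) ≠ 0 := (_root_.map_ne_zero _).2 hN
    rw [nodalWeight_eq_eval_nodal_erase_inv, eval_mul, eval_C, map_mul, Complex.ofReal_inv,
      ← Complex.mul_conj]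
    simp only [id]
    field_simp
  rw [hweight]
  exact mul_pos hpos (Complex.zero_lt_real.2 (inv_pos.2 (Complex.normSq_pos.2 hN)))

/-- `F / G` is positive real on the right half-plane, so its poles are simple with positive
residues; `H / G`, with the same residues and no polynomial part, is a positive combination of
the `1 / (w - r)`. -/
theorem re_mul_conj_nonneg_of_eval_eq {F G H : ℂ[X]} (hG : G ≠ 0)
    (hFG : ∀ w : ℂ, 0 < w.re → 0 ≤ (F.eval w * conj (G.eval w)).re)
    (hroots : ∀ r, G.IsRoot r → r.re = 0 ∧ F.eval r ≠ 0)
    (hH : ∀ r, G.IsRoot r → H.eval r = F.eval r) (hdeg : H.degree < G.degree) {w : ℂ}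
    (hw : 0 < w.re) : 0 ≤ (H.eval w * conj (G.eval w)).re := by
  classical
  have hnodup := nodup_roots_of_re_mul_conj_nonneg hG hFG hroots
  set s := G.roots.toFinset
  set a := G.leadingCoeff
  have hGs : G = C a * nodal s id := eq_C_leadingCoeff_mul_nodal hnodup
  have hmem : ∀ r, r ∈ s ↔ G.IsRoot r := by simp [s, mem_roots hG]
  have hcard : H.degree < s.card := by
    rwa [Multiset.toFinset_card_of_nodup hnodup, IsAlgClosed.card_roots_eq_natDegree,
      ← degree_eq_natDegree hG]
  have hpos : ∀ r ∈ s, 0 < conj a * nodalWeight s id r * H.eval r := by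
    intro r hr
    obtain ⟨hre, hF⟩ := hroots r ((hmem r).1 hr)
    have hfac : G = (X - C r) ^ 1 * (C a * nodal (s.erase r) id) := by
      rw [pow_one, mul_left_comm]
      exact hGs.trans (congrArg _ (nodal_eq_mul_nodal_erase hr))
    have hGr : (C a * nodal (s.erase r) id).eval r ≠ 0 := by
      rw [eval_mul, eval_C]
      exact mul_ne_zero (leadingCoeff_ne_zero.2 hG)
        (eval_nodal_not_at_node fun j hj => (Finset.ne_of_mem_erase hj).symm)
    rw [hH r ((hmem r).1 hr)]
    exact conj_mul_nodalWeight_mul_pos (eq_one_and_pos_of_re_mul_conj_nonneg one_ne_zero hF hGr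
      (by rw [← hfac, hre]; exact hFG)).2
  have := re_mul_eval_mul_conj_eval_nodal_nonneg hcard
    (fun r hr => (hroots r ((hmem r).1 hr)).1) hpos hw
  rwa [hGs, eval_mul, eval_C, map_mul, mul_left_comm, ← mul_assoc]

end PositiveReal

section Parity

def HasParity (f : ℝ[X]) (d : ℕ) : Prop := ∀ z : ℂ, aeval (-z) f = (-1) ^ d * aeval z f

lemma hasParity_of_coeff_ne_zero {f : ℝ[X]} {d : ℕ}
    (h : ∀ j, f.coeff j ≠ 0 → Even (d + j)) : HasParity f d := by
  intro z
  simp only [aeval_eq_sum_range, Finset.mul_sum]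
  refine Finset.sum_congr rfl fun j _ => ?_
  by_cases hj : f.coeff j = 0
  · simp [hj]
  · have hdj : (-1 : ℂ) ^ j = (-1) ^ d := by
      have := h j hj
      rw [neg_one_pow_eq_pow_mod_two, neg_one_pow_eq_pow_mod_two (n := d)]
      simp only [Nat.even_iff] at this
      congr 1; omega
    rw [neg_pow, hdj]
    simp only [Algebra.smul_def]
    ring

lemma HasParity.conj_aeval {f : ℝ[X]} {d : ℕ} (hf : HasParity f d) {z : ℂ} (hz : z.re = 0) :
    conj (aeval z f) = (-1) ^ d * aeval z f := by
  rw [← aeval_conj, ← hf, show conj z = -z from Complex.ext (by simp [hz]) (by simp)]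

lemma aeval_add_eq_zero_iff {e o : ℝ[X]} {d : ℕ} (he : HasParity e d) (ho : HasParity o (d + 1))
    {z : ℂ} (hz : z.re = 0) : aeval z e + aeval z o = 0 ↔ aeval z e = 0 ∧ aeval z o = 0 := by
  refine ⟨fun h => ?_, fun h => by simp [h.1, h.2]⟩
  have hconj := congrArg conj h
  rw [map_add, he.conj_aeval hz, ho.conj_aeval hz, map_zero, pow_succ] at hconj
  have hd : ((-1 : ℂ) ^ d) ≠ 0 := pow_ne_zero _ (by norm_num)
  have hsub : aeval z e - aeval z o = 0 := by
    apply (mul_eq_zero.1 (by linear_combination hconj : (-1 : ℂ) ^ d * _ = 0)).resolve_left hd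
  exact ⟨by linear_combination (h + hsub) / 2, by linear_combination (h - hsub) / 2⟩

lemma norm_aeval_neg_add {e o : ℝ[X]} {d : ℕ} (he : HasParity e d) (ho : HasParity o (d + 1))
    (z : ℂ) : ‖aeval (-z) (e + o)‖ = ‖aeval z e - aeval z o‖ := by
  rw [map_add, he, ho, pow_succ, show (-1 : ℂ) ^ d * aeval z e + (-1) ^ d * -1 * aeval z o
    = (-1) ^ d * (aeval z e - aeval z o) by ring, norm_mul]
  simp

lemma hasParity_hurwitzOddPart (p : ℝ[X]) :
    HasParity (hurwitzOddPart p) (p.natDegree + 1) := by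
  refine hasParity_of_coeff_ne_zero fun j hj => ?_
  rw [coeff_hurwitzOddPart] at hj
  split_ifs at hj with h
  · simp only [Nat.even_iff, Nat.odd_iff] at h ⊢; omega
  · exact absurd rfl hj

lemma hasParity_sub_hurwitzOddPart (p : ℝ[X]) :
    HasParity (p - hurwitzOddPart p) p.natDegree := by
  refine hasParity_of_coeff_ne_zero fun j hj => ?_
  rw [coeff_sub, coeff_hurwitzOddPart] at hj
  split_ifs at hj with h
  · exact absurd (sub_self _) hj
  · exact Nat.not_odd_iff_even.1 h

lemma aeval_sub_hurwitzOddPart (p : ℝ[X]) (z : ℂ) :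
    aeval z (p - hurwitzOddPart p) = aeval z (routhReduce p - hurwitzOddPart p) +
      ((p.leadingCoeff / p.coeff (p.natDegree - 1) : ℝ) : ℂ) * z *
        aeval z (hurwitzOddPart p) := by
  simp only [routhReduce, map_sub, map_mul, aeval_C, aeval_X, Complex.coe_algebraMap]
  ring

lemma hasParity_routhReduce_sub_hurwitzOddPart (p : ℝ[X]) :
    HasParity (routhReduce p - hurwitzOddPart p) p.natDegree := by
  intro z
  have hE := hasParity_sub_hurwitzOddPart p z
  have hO := hasParity_hurwitzOddPart p z
  rw [aeval_sub_hurwitzOddPart, aeval_sub_hurwitzOddPart, hO, pow_succ] at hE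
  linear_combination hE

end Parity

section Stability

def IsHurwitzStable (p : ℝ[X]) : Prop := ∀ z : ℂ, aeval z p = 0 → z.re < 0

lemma norm_neg_conj_sub_lt_norm_sub {z r : ℂ} (hz : 0 < z.re) (hr : r.re < 0) :
    ‖-conj z - r‖ < ‖z - r‖ := by
  rw [← sq_lt_sq₀ (norm_nonneg _) (norm_nonneg _), Complex.sq_norm, Complex.sq_norm,
    Complex.normSq_apply, Complex.normSq_apply]
  simp only [Complex.sub_re, Complex.neg_re, Complex.conj_re, Complex.sub_im, Complex.neg_im,
    Complex.conj_im, neg_neg]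
  nlinarith

lemma norm_aeval_eq_mul_prod (p : ℝ[X]) (z : ℂ) : ‖aeval z p‖ =
    ‖p.leadingCoeff‖ * ((p.map (algebraMap ℝ ℂ)).roots.map fun r => ‖z - r‖).prod := by
  conv_lhs =>
    rw [← eval_map_algebraMap, (IsAlgClosed.splits (p.map (algebraMap ℝ ℂ))).eq_prod_roots]
  rw [eval_mul, eval_C, eval_multiset_prod, norm_mul, leadingCoeff_map, Multiset.map_map,
    show ∀ s : Multiset ℂ, ‖s.prod‖ = (s.map (‖·‖)).prod from
      map_multiset_prod normHom,
    Multiset.map_map]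
  simp [Function.comp_def]

lemma norm_aeval_neg_eq_mul_prod (p : ℝ[X]) (z : ℂ) : ‖aeval (-z) p‖ =
    ‖p.leadingCoeff‖ *
      ((p.map (algebraMap ℝ ℂ)).roots.map fun r => ‖-conj z - r‖).prod := by
  rw [← norm_aeval_eq_mul_prod, ← Complex.norm_conj, ← aeval_conj, map_neg]

lemma IsHurwitzStable.re_lt_zero_of_mem_roots {p : ℝ[X]} (hp : IsHurwitzStable p) {r : ℂ}
    (hr : r ∈ (p.map (algebraMap ℝ ℂ)).roots) : r.re < 0 :=
  hp r (by rw [← eval_map_algebraMap]; exact isRoot_of_mem_roots hr)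

lemma IsHurwitzStable.norm_aeval_neg_le {p : ℝ[X]} (hp : IsHurwitzStable p) {z : ℂ}
    (hz : 0 < z.re) : ‖aeval (-z) p‖ ≤ ‖aeval z p‖ := by
  rw [norm_aeval_neg_eq_mul_prod, norm_aeval_eq_mul_prod]
  refine mul_le_mul_of_nonneg_left (Multiset.prod_map_le_prod_map₀ _ _ (fun _ _ => norm_nonneg _)
    fun r hr => (norm_neg_conj_sub_lt_norm_sub hz (hp.re_lt_zero_of_mem_roots hr)).le)
    (norm_nonneg _)

lemma IsHurwitzStable.norm_aeval_neg_lt {p : ℝ[X]} (hp : IsHurwitzStable p)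
    (hdeg : 0 < p.natDegree) {z : ℂ} (hz : 0 < z.re) : ‖aeval (-z) p‖ < ‖aeval z p‖ := by
  have hp0 : p ≠ 0 := by rintro rfl; simp at hdeg
  by_cases hroot : aeval (-z) p = 0
  · rw [hroot, norm_zero, norm_pos_iff]
    exact fun h => (hp z h).not_gt hz
  rw [norm_aeval_neg_eq_mul_prod, norm_aeval_eq_mul_prod]
  refine mul_lt_mul_of_pos_left (Multiset.prod_map_lt_prod_map ?_ _ _ ?_ ?_)
    (norm_pos_iff.2 (leadingCoeff_ne_zero.2 hp0))
  · rw [← Multiset.card_pos, IsAlgClosed.card_roots_eq_natDegree, natDegree_map]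
    exact hdeg
  · refine fun r hr => norm_pos_iff.2 fun h => hroot ?_
    rw [← norm_eq_zero, ← Complex.norm_conj, ← aeval_conj, map_neg,
      ← eval_map_algebraMap, sub_eq_zero.1 h, norm_eq_zero]
    exact isRoot_of_mem_roots hr
  · exact fun r hr => norm_neg_conj_sub_lt_norm_sub hz (hp.re_lt_zero_of_mem_roots hr)

lemma norm_sub_le_norm_add_iff (a b : ℂ) :
    ‖a - b‖ ≤ ‖a + b‖ ↔ 0 ≤ (a * conj b).re := by
  rw [← sq_le_sq₀ (norm_nonneg _) (norm_nonneg _), Complex.sq_norm, Complex.sq_norm,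
    Complex.normSq_sub, Complex.normSq_add]
  constructor <;> intro h <;> linarith

lemma IsHurwitzStable.re_mul_conj_nonneg {e o : ℝ[X]} {d : ℕ} (hp : IsHurwitzStable (e + o))
    (he : HasParity e d) (ho : HasParity o (d + 1)) {z : ℂ} (hz : 0 < z.re) :
    0 ≤ (aeval z e * conj (aeval z o)).re := by
  rw [← norm_sub_le_norm_add_iff, ← norm_aeval_neg_add he ho, ← map_add]
  exact hp.norm_aeval_neg_le hz

lemma IsHurwitzStable.re_eq_zero_of_aeval_eq_zero {e o : ℝ[X]} {d : ℕ}
    (hp : IsHurwitzStable (e + o)) (hdeg : 0 < (e + o).natDegree) (he : HasParity e d)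
    (ho : HasParity o (d + 1)) {z : ℂ} (hz : aeval z o = 0) : z.re = 0 := by
  have heq : ‖aeval (-z) (e + o)‖ = ‖aeval z (e + o)‖ := by
    rw [norm_aeval_neg_add he ho, map_add, hz, sub_zero, add_zero]
  rcases lt_trichotomy z.re 0 with h | h | h
  · have := hp.norm_aeval_neg_lt hdeg (z := -z) (by simpa using h)
    rw [neg_neg] at this
    linarith
  · exact h
  · linarith [hp.norm_aeval_neg_lt hdeg h]

lemma IsHurwitzStable.coeff_natDegree_pred_pos {p : ℝ[X]} (hp : IsHurwitzStable p)
    (hdeg : 0 < p.natDegree) (hlead : 0 < p.leadingCoeff) : 0 < p.coeff (p.natDegree - 1) := by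
  have hvieta :=
    (IsAlgClosed.splits (p.map (algebraMap ℝ ℂ))).nextCoeff_eq_neg_sum_roots_mul_leadingCoeff
  rw [nextCoeff_map (algebraMap ℝ ℂ).injective, leadingCoeff_map,
    nextCoeff_of_natDegree_pos hdeg] at hvieta
  have hsum : (p.map (algebraMap ℝ ℂ)).roots.sum.re < 0 := by
    have hre := map_multiset_sum Complex.reAddGroupHom (p.map (algebraMap ℝ ℂ)).roots
    rw [Complex.coe_reAddGroupHom] at hre
    have hne : (p.map (algebraMap ℝ ℂ)).roots ≠ ∅ := by
      rw [Multiset.empty_eq_zero, ne_eq, ← Multiset.card_eq_zero,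
        IsAlgClosed.card_roots_eq_natDegree, natDegree_map]
      exact hdeg.ne'
    rw [hre]
    simpa using Multiset.sum_lt_sum_of_nonempty (f := Complex.re) (g := fun _ => 0) hne
      fun r hr => hp.re_lt_zero_of_mem_roots hr
  have := congrArg Complex.re hvieta
  simp only [Complex.coe_algebraMap, Complex.ofReal_re, neg_mul, Complex.neg_re,
    Complex.re_ofReal_mul] at this
  rw [this]
  nlinarith

lemma isHurwitzStable_iff {p : ℝ[X]} :
    IsHurwitzStable p ↔ ∀ z : ℂ, 0 ≤ z.re → aeval z p ≠ 0 :=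
  ⟨fun h z hz h0 => (h z h0).not_ge hz, fun h z h0 => not_le.1 fun hz => h z hz h0⟩

end Stability

section RouthStep

lemma IsHurwitzStable.re_mul_conj_routhReduce_nonneg {p : ℝ[X]} (hp : IsHurwitzStable p)
    (hdeg : 1 ≤ p.natDegree) (hb : p.coeff (p.natDegree - 1) ≠ 0) {w : ℂ} (hw : 0 < w.re) :
    0 ≤ (aeval w (routhReduce p - hurwitzOddPart p) * conj (aeval w (hurwitzOddPart p))).re := by
  have hEO : IsHurwitzStable (p - hurwitzOddPart p + hurwitzOddPart p) := by
    rwa [sub_add_cancel]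
  have hdeg' : 0 < (p - hurwitzOddPart p + hurwitzOddPart p).natDegree := by
    rw [sub_add_cancel]; omega
  have hE := hasParity_sub_hurwitzOddPart p
  have hO := hasParity_hurwitzOddPart p
  simp only [← eval_map_algebraMap]
  refine re_mul_conj_nonneg_of_eval_eq (F := (p - hurwitzOddPart p).map (algebraMap ℝ ℂ)) ?_
    (fun w hw => ?_) (fun r hr => ?_) (fun r hr => ?_) ?_ hw
  · exact (Polynomial.map_ne_zero_iff (algebraMap ℝ ℂ).injective).2
      (hurwitzOddPart_ne_zero p hdeg hb)
  · simpa only [eval_map_algebraMap] using hEO.re_mul_conj_nonneg hE hO hw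
  · rw [IsRoot, eval_map_algebraMap] at hr
    have hre := hEO.re_eq_zero_of_aeval_eq_zero hdeg' hE hO hr
    refine ⟨hre, fun hEr => ?_⟩
    rw [eval_map_algebraMap] at hEr
    have := hp r (by rw [← sub_add_cancel p (hurwitzOddPart p), map_add, hEr, hr, add_zero])
    linarith
  · rw [IsRoot, eval_map_algebraMap] at hr
    rw [eval_map_algebraMap, eval_map_algebraMap, aeval_sub_hurwitzOddPart, hr, mul_zero, add_zero]
  · rw [degree_map, degree_map]
    exact degree_routhReduce_sub_hurwitzOddPart_lt p hdeg hb

lemma add_mul_add_eq_zero_iff {u v x : ℂ} (huv : 0 ≤ (u * conj v).re) (hx : 0 ≤ x.re) :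
    u + x * v + v = 0 ↔ u + v = 0 := by
  have hzero : ∀ y : ℂ, 0 ≤ y.re → u + y * v + v = 0 → u = 0 ∧ v = 0 := by
    intro y hy h
    have hu : u = -((y + 1) * v) := by linear_combination h
    rw [hu, neg_mul, mul_assoc, Complex.mul_conj, Complex.neg_re, Complex.re_mul_ofReal,
      Complex.add_re, Complex.one_re] at huv
    have hv : Complex.normSq v = 0 := by nlinarith [Complex.normSq_nonneg v]
    rw [Complex.normSq_eq_zero] at hv
    simp [hu, hv]
  constructor
  · intro h
    simp [hzero x hx h]
  · intro h
    obtain ⟨hu, hv⟩ := hzero 0 le_rfl (by simpa using h)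
    simp [hu, hv]

lemma aeval_eq_zero_iff_aeval_routhReduce_eq_zero {p : ℝ[X]}
    (hc : 0 ≤ p.leadingCoeff / p.coeff (p.natDegree - 1)) {z : ℂ} (hz : 0 ≤ z.re)
    (hpos : 0 < z.re →
      0 ≤ (aeval z (routhReduce p - hurwitzOddPart p) * conj (aeval z (hurwitzOddPart p))).re) :
    aeval z p = 0 ↔ aeval z (routhReduce p) = 0 := by
  have hp : aeval z p = aeval z (p - hurwitzOddPart p) + aeval z (hurwitzOddPart p) := by
    rw [← map_add, sub_add_cancel]
  have hq : aeval z (routhReduce p) = aeval z (routhReduce p - hurwitzOddPart p) +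
      aeval z (hurwitzOddPart p) := by
    rw [← map_add, sub_add_cancel]
  rw [hp, hq]
  rcases hz.eq_or_lt with hz | hz
  · rw [aeval_add_eq_zero_iff (hasParity_sub_hurwitzOddPart p) (hasParity_hurwitzOddPart p)
      hz.symm,
      aeval_add_eq_zero_iff (hasParity_routhReduce_sub_hurwitzOddPart p)
        (hasParity_hurwitzOddPart p) hz.symm, aeval_sub_hurwitzOddPart]
    exact and_congr_left fun hO => by rw [hO, mul_zero, add_zero]
  · rw [aeval_sub_hurwitzOddPart]
    exact add_mul_add_eq_zero_iff (hpos hz) (by rw [Complex.re_ofReal_mul]; positivity)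

theorem isHurwitzStable_routhReduce_iff {p : ℝ[X]} (hdeg : 1 ≤ p.natDegree)
    (hb0 : 0 < p.leadingCoeff) (hb1 : 0 < p.coeff (p.natDegree - 1)) :
    IsHurwitzStable p ↔ IsHurwitzStable (routhReduce p) := by
  have hc := (div_pos hb0 hb1).le
  refine ⟨fun hp => ?_, fun hq => ?_⟩
  · refine isHurwitzStable_iff.2 fun z hz => ?_
    rw [Ne, ← aeval_eq_zero_iff_aeval_routhReduce_eq_zero hc hz
      fun hz => hp.re_mul_conj_routhReduce_nonneg hdeg hb1.ne' hz]
    exact isHurwitzStable_iff.1 hp z hz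
  · have hq' : IsHurwitzStable (routhReduce p - hurwitzOddPart p + hurwitzOddPart p) := by
      rwa [sub_add_cancel]
    refine isHurwitzStable_iff.2 fun z hz => ?_
    rw [Ne, aeval_eq_zero_iff_aeval_routhReduce_eq_zero hc hz fun hz =>
      hq'.re_mul_conj_nonneg (hasParity_routhReduce_sub_hurwitzOddPart p)
        (hasParity_hurwitzOddPart p) hz]
    exact isHurwitzStable_iff.1 hq z hz

end RouthStep

theorem isHurwitzStable_iff_forall_hurwitzDet_pos {p : ℝ[X]} (hlead : 0 < p.leadingCoeff) :
    IsHurwitzStable p ↔ ∀ k, 1 ≤ k → k ≤ p.natDegree → 0 < hurwitzDet p k := by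
  induction hn : p.natDegree generalizing p with
  | zero =>
    refine iff_of_true (fun z hz => ?_) fun k hk1 hk2 => by omega
    rw [eq_C_of_natDegree_eq_zero hn, aeval_C, Complex.coe_algebraMap, Complex.ofReal_eq_zero] at hz
    rw [leadingCoeff, hn] at hlead
    exact absurd hz hlead.ne'
  | succ n ih =>
    have hdeg : 1 ≤ p.natDegree := by omega
    by_cases hb : 0 < p.coeff (p.natDegree - 1)
    · have hq : (routhReduce p).natDegree = n := by
        rw [natDegree_routhReduce p hdeg hb.ne', hn, Nat.add_sub_cancel]
      have hqlead : 0 < (routhReduce p).leadingCoeff := by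
        rwa [leadingCoeff, hq, show n = p.natDegree - 1 by omega,
          coeff_routhReduce_natDegree_pred p hdeg]
      rw [isHurwitzStable_routhReduce_iff hdeg hlead hb, ih hqlead hq, ← hn,
        forall_hurwitzDet_pos_iff_routhReduce p hdeg hb, hn, Nat.add_sub_cancel]
    · refine iff_of_false (fun hp => hb (hp.coeff_natDegree_pred_pos (by omega) hlead))
        fun h => hb ?_
      rw [← hurwitzDet_one p hdeg]
      exact h 1 le_rfl (by omega)

end RouthHurwitz

theorem routh_hurwitz_criterion_general
    (n : ℕ) (p : Polynomial ℝ)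
    (hdeg : p.degree = n) (hlead : 0 < p.leadingCoeff) :
    (∀ z : ℂ, Polynomial.aeval z p = 0 → z.re < 0) ↔
      (∀ k : ℕ, 1 ≤ k → k ≤ n → 0 < hurwitzDet p k) := by
  rw [← natDegree_eq_of_degree_eq_some hdeg]
  exact RouthHurwitz.isHurwitzStable_iff_forall_hurwitzDet_pos hlead

/-- **Routh–Hurwitz criterion.** For a real polynomial of degree `n ≥ 1` with
positive leading coefficient, every complex root has negative real part iff
all the Hurwitz determinants `Δ_1, …, Δ_n` are positive. -/
theorem routh_hurwitz_criterion
    (n : ℕ) (hn : 1 ≤ n) (p : Polynomial ℝ)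
    (hdeg : p.degree = n) (hlead : 0 < p.leadingCoeff) :
    (∀ z : ℂ, Polynomial.aeval z p = 0 → z.re < 0) ↔
      (∀ k : ℕ, 1 ≤ k → k ≤ n → 0 < hurwitzDet p k) :=
  routh_hurwitz_criterion_general n p hdeg hlead
end

section
/- Let p(z) = b₀zⁿ + ⋯ + b_n be a real polynomial of degree n, and define the reflected polynomial p̃(z) := (−1)ⁿ p(−z), whose coefficients are b̃_k = (−1)^k b_k for k = 0, 1, …, n. Then for every k = 1, …, n the Hurwitz determinants of p̃ and p satisfy Δ̃_k = (−1)^{⌈k/2⌉} Δ_k, where ⌈k/2⌉ denotes the least integer greater than or equal to k/2. -/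
open Polynomial

lemma Polynomial.coeff_comp_neg_X {R : Type*} [CommRing R] (p : R[X]) (t : ℕ) :
    (p.comp (-X)).coeff t = (-1) ^ t * p.coeff t := by
  have hX : (-X : R[X]) = C (-1) * X := by simp
  rw [hX, comp_C_mul_X_coeff, mul_comm]

lemma Polynomial.natDegree_C_neg_one_pow_mul_comp_neg_X {R : Type*} [CommRing R] [IsDomain R]
    (n : ℕ) (p : R[X]) : (C ((-1) ^ n) * p.comp (-X)).natDegree = p.natDegree := by
  rw [natDegree_C_mul (pow_ne_zero _ (neg_ne_zero.mpr one_ne_zero)), natDegree_comp,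
    natDegree_neg, natDegree_X, mul_one]

lemma Polynomial.coeff_sub_C_neg_one_pow_mul_comp_neg_X {R : Type*} [CommRing R]
    (p : R[X]) {n k : ℕ} (hk : k ≤ n) :
    (C ((-1) ^ n) * p.comp (-X)).coeff (n - k) = (-1) ^ k * p.coeff (n - k) := by
  rw [coeff_C_mul, coeff_comp_neg_X, ← mul_assoc, ← pow_add]
  congr 1
  exact neg_one_pow_congr (by simp only [Nat.even_iff]; omega)

lemma Fin.prod_neg_one_pow_val_succ {R : Type*} [CommMonoid R] [HasDistribNeg R] (k : ℕ) :
    ∏ i : Fin k, (-1 : R) ^ ((i : ℕ) + 1) = (-1) ^ ((k + 1) / 2) := by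
  induction k with
  | zero => simp
  | succ k ih =>
    rw [Fin.prod_univ_castSucc]
    simp only [Fin.val_castSucc, Fin.val_last]
    rw [ih, ← pow_add]
    refine neg_one_pow_congr ?_
    rcases Nat.even_or_odd k with ⟨m, rfl⟩ | ⟨m, rfl⟩ <;> simp only [Nat.even_iff] <;> omega

lemma hurwitzDet_eq_of_coeff_sub_eq_neg_one_pow_mul {p q : ℝ[X]}
    (hdeg : q.natDegree = p.natDegree)
    (hcoeff : ∀ m ≤ p.natDegree, q.coeff (p.natDegree - m) = (-1) ^ m * p.coeff (p.natDegree - m))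
    (k : ℕ) : hurwitzDet q k = (-1) ^ ((k + 1) / 2) * hurwitzDet p k := by
  rw [← Fin.prod_neg_one_pow_val_succ, hurwitzDet, hurwitzDet, ← Matrix.det_mul_column, hdeg]
  congr 1
  ext i j
  simp only [Matrix.of_apply]
  split_ifs with h
  · have hm : ((2 * (j : ℤ) - i + 1).toNat : ℤ) = 2 * j - i + 1 := Int.toNat_of_nonneg h.1
    rw [hcoeff _ (by omega)]
    congr 1
    exact neg_one_pow_congr (by simp only [Nat.even_iff]; omega)
  · rw [mul_zero]

/-- For a real polynomial `p` of degree `n`, the reflected polynomial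
`p̃(z) = (-1)^n p(-z)` has coefficients `b̃_k = (-1)^k b_k`, and its Hurwitz
determinants satisfy `Δ̃_k = (-1)^⌈k/2⌉ Δ_k` for `k = 1, …, n`. -/
theorem hurwitzDet_reflected
    (n : ℕ) (p q : Polynomial ℝ) (hdeg : p.degree = n)
    (hq : q = Polynomial.C ((-1) ^ n) * p.comp (-Polynomial.X)) :
    (∀ k : ℕ, k ≤ n → q.coeff (n - k) = (-1) ^ k * p.coeff (n - k)) ∧
      ∀ k : ℕ, 1 ≤ k → k ≤ n →
        hurwitzDet q k = (-1) ^ ((k + 1) / 2) * hurwitzDet p k := by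
  have hn : p.natDegree = n := natDegree_eq_of_degree_eq_some hdeg
  subst hq hn
  exact ⟨fun k hk => p.coeff_sub_C_neg_one_pow_mul_comp_neg_X hk, fun k _ _ =>
    hurwitzDet_eq_of_coeff_sub_eq_neg_one_pow_mul (natDegree_C_neg_one_pow_mul_comp_neg_X _ p)
      (fun m hm => p.coeff_sub_C_neg_one_pow_mul_comp_neg_X hm) k⟩
end

section
/- (Characterization of positive operators) Let A be an n×n Hermitian complex matrix with characteristic polynomial p_A(z) = det(zI − A) = b₀zⁿ + b₁z^{n−1} + ⋯ + b_n (whose coefficients are real), and let n₀ ∈ {0, 1, …, n} be the multiplicity of the number zero as a root of p_A. Then A is positive semidefinite if and only if the Hurwitz determinants of p_A satisfy (−1)^{⌈k/2⌉} Δ_k > 0 for all k = 1, 2, …, n−n₀, where ⌈k/2⌉ is the least integer greater than or equal to k/2. -/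
open ComplexOrder

/-!
The characteristic polynomial of `A` is `z ^ n₀ * ∏ (z - λ)` over the nonzero eigenvalues `λ`, and
its Hurwitz determinants are, up to the sign `(-1) ^ ⌈k / 2⌉`, those of the sequence `e_t(λ)` of
elementary symmetric functions of these eigenvalues, i.e. of the coefficients of `∏ (z + λ)`. So
it suffices to show that nonzero reals `λ₁, …, λₘ` are all positive iff the first `m` Hurwitz
determinants of `(e_t(λ))` are positive.

If all `λᵢ > 0`, peeling off one factor `z + λ` and using multilinearity in the rows writes every
minor of the Hurwitz matrix on its first `k` columns as a combination, with nonnegative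
coefficients, of such minors for the shorter product; by induction these are nonnegative, and one
term is positive. Conversely, one step of Routh's algorithm clears the first column of the
Hurwitz matrix, `Δₖ₊₁(b) = b₁ Δₖ(b')`, so positivity of the Hurwitz determinants is inherited
by `b'` and forces all `e_t(λ) ≥ 0`; then `∏ (x + λᵢ) > 0` for `x > 0`, so no `λᵢ` is negative.
-/

open Polynomial Matrix Finset

theorem monotone_add_of_strictMono {ι : Type*} [PartialOrder ι] {S δ : ι → ℤ}
    (hS : StrictMono S) (hδ : ∀ i, 0 ≤ δ i ∧ δ i ≤ 1) : Monotone fun i => S i + δ i := by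
  intro i i' h
  rcases h.eq_or_lt with rfl | hlt
  · exact le_rfl
  · show S i + δ i ≤ S i' + δ i'
    have := hS hlt
    have := hδ i
    have := hδ i'
    omega

theorem Matrix.det_of_add_smul_rows {R n : Type*} [CommRing R] [Fintype n] [DecidableEq n]
    (u v : n → n → R) (a : R) :
    (of fun i => u i + a • v i).det =
      ∑ t : Finset n, a ^ #tᶜ * (of fun i => if i ∈ t then u i else v i).det := by
  have hsplit := (detRowAlternating : (n → R) [⋀^n]→ₗ[R] R).toMultilinearMap.map_add_univ u
    fun i => a • v i
  refine hsplit.trans (Finset.sum_congr rfl fun t _ => ?_)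
  have hrows : t.piecewise u (fun i => a • v i) =
      of fun i j => (if i ∈ t then 1 else a) * (if i ∈ t then u i j else v i j) := by
    ext i j
    by_cases hi : i ∈ t <;> simp [hi]
  rw [AlternatingMap.coe_multilinearMap, hrows]
  refine (det_mul_column (fun i => if i ∈ t then 1 else a) _).trans ?_
  simp only [prod_ite, prod_const_one, one_mul, prod_const, filter_not, filter_mem_eq_inter,
    univ_inter, compl_eq_univ_sdiff]
  congr 2
  ext i j
  by_cases hi : i ∈ t <;> simp [hi]

namespace Multiset

theorem forall_nonneg_iff_forall_filter_ne_zero_pos {α : Type*} [PartialOrder α] [Zero α]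
    [DecidableEq α] {s : Multiset α} : (∀ a ∈ s, 0 ≤ a) ↔ ∀ a ∈ s.filter (· ≠ 0), 0 < a := by
  simp only [mem_filter, le_iff_eq_or_lt]
  grind

theorem count_add_card_filter_ne {α : Type*} [DecidableEq α] (a : α) (s : Multiset α) :
    s.count a + card (s.filter (· ≠ a)) = card s := by
  rw [← card_replicate (s.count a) a, ← filter_eq', ← card_add, filter_add_not]

variable {R : Type*} [CommRing R]

theorem esymm_zero_right (s : Multiset R) : s.esymm 0 = 1 := by
  simp [esymm]

theorem esymm_cons_succ (a : R) (s : Multiset R) (n : ℕ) :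
    (a ::ₘ s).esymm (n + 1) = s.esymm (n + 1) + a * s.esymm n := by
  simp [esymm, powersetCard_cons, map_map, sum_map_mul_left]

theorem esymm_eq_zero_of_card_lt {s : Multiset R} {n : ℕ} (h : card s < n) : s.esymm n = 0 := by
  simp [esymm, powersetCard_eq_empty _ h]

theorem prod_X_sub_C_eq_X_pow_count_mul [DecidableEq R] (s : Multiset R) :
    (s.map (X - C ·)).prod = X ^ s.count 0 * ((s.filter (· ≠ 0)).map (X - C ·)).prod := by
  conv_lhs => rw [← s.filter_add_not (· = 0)]
  rw [map_add, prod_add, filter_eq', map_replicate, prod_replicate, C_0, sub_zero]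

end Multiset

section CommRing

variable {R : Type*} [CommRing R]

noncomputable def esymmSeq (s : Multiset R) (t : ℤ) : R :=
  if 0 ≤ t then s.esymm t.toNat else 0

theorem esymmSeq_of_neg (s : Multiset R) {t : ℤ} (ht : t < 0) : esymmSeq s t = 0 :=
  if_neg ht.not_ge

theorem esymmSeq_of_card_lt {s : Multiset R} {t : ℤ} (ht : (Multiset.card s : ℤ) < t) :
    esymmSeq s t = 0 := by
  rw [esymmSeq, if_pos (by omega), Multiset.esymm_eq_zero_of_card_lt (by omega)]

theorem esymmSeq_zero_right (s : Multiset R) : esymmSeq s 0 = 1 := by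
  simp [esymmSeq, Multiset.esymm_zero_right]

theorem esymmSeq_zero_left (t : ℤ) : esymmSeq (0 : Multiset R) t = if t = 0 then 1 else 0 := by
  split_ifs with ht
  · rw [ht, esymmSeq_zero_right]
  · rcases lt_or_gt_of_ne ht with ht | ht
    · exact esymmSeq_of_neg _ ht
    · exact esymmSeq_of_card_lt (by simpa using ht)

theorem esymmSeq_cons (a : R) (s : Multiset R) (t : ℤ) :
    esymmSeq (a ::ₘ s) t = esymmSeq s t + a * esymmSeq s (t - 1) := by
  rcases lt_trichotomy t 0 with ht | rfl | ht
  · simp [esymmSeq_of_neg _ ht, esymmSeq_of_neg _ (show t - 1 < 0 by omega)]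
  · simp [esymmSeq_zero_right, esymmSeq_of_neg s (show (-1 : ℤ) < 0 by omega)]
  · obtain ⟨n, rfl⟩ : ∃ n : ℕ, t = n + 1 := ⟨t.toNat - 1, by omega⟩
    simp only [esymmSeq, add_sub_cancel_right]
    rw [if_pos (by omega), if_pos (by omega), if_pos (by omega),
      show ((n : ℤ) + 1).toNat = n + 1 by omega, Int.toNat_natCast, Multiset.esymm_cons_succ]

/-- `hurwitzRows b S` consists of the rows `S i` (counted from `0`) and the first `k` columns of
the infinite Hurwitz matrix `(b (2 * j - i + 1))_{i, j ≥ 0}`. -/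
def hurwitzRows (b : ℤ → R) {k : ℕ} (S : Fin k → ℤ) : Matrix (Fin k) (Fin k) R :=
  of fun i j => b (2 * j - S i + 1)

def hurwitzMatrix (b : ℤ → R) (k : ℕ) : Matrix (Fin k) (Fin k) R :=
  hurwitzRows b fun i => (i : ℤ)

theorem det_hurwitzMatrix_one (b : ℤ → R) : (hurwitzMatrix b 1).det = b 1 := by
  simp [hurwitzMatrix, hurwitzRows]

theorem prod_neg_one_pow_succ (k : ℕ) :
    ∏ i : Fin k, (-1 : R) ^ ((i : ℕ) + 1) = (-1) ^ ((k + 1) / 2) := by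
  induction k with
  | zero => simp
  | succ k ih =>
    rw [Fin.prod_univ_castSucc]
    simp only [Fin.val_castSucc, Fin.val_last]
    rw [ih, ← pow_add, neg_one_pow_eq_pow_mod_two,
      neg_one_pow_eq_pow_mod_two (n := (k + 1 + 1) / 2)]
    congr 1
    rcases Nat.even_or_odd' k with ⟨m, rfl | rfl⟩ <;> omega

theorem det_hurwitzMatrix_neg_one_pow_mul (b : ℤ → R) (k : ℕ) :
    (hurwitzMatrix (fun t => (-1) ^ t.natAbs * b t) k).det =
      (-1) ^ ((k + 1) / 2) * (hurwitzMatrix b k).det := by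
  rw [← prod_neg_one_pow_succ, ← det_mul_column]
  congr 1
  ext i j
  simp only [hurwitzMatrix, hurwitzRows, of_apply]
  congr 1
  rw [neg_one_pow_eq_pow_mod_two, neg_one_pow_eq_pow_mod_two (n := (i : ℕ) + 1)]
  congr 1
  omega

/-- Routh's reduction: for `c = b 0 / b 1`, the Hurwitz matrix of `routhStep b c` is the one of
`b` with its first column cleared by row operations and then removed. -/
def routhStep (b : ℤ → R) (c : R) (t : ℤ) : R :=
  if Even t then b (t + 1) else b (t + 1) - c * b (t + 2)

theorem det_hurwitzMatrix_succ {b : ℤ → R} {c : R} (hneg : ∀ t < 0, b t = 0)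
    (hc : b 0 = c * b 1) (k : ℕ) :
    (hurwitzMatrix b (k + 1)).det = b 1 * (hurwitzMatrix (routhStep b c) k).det := by
  -- subtract `c` times row `i - 1` from every odd row `i`
  set M : Matrix (Fin (k + 1)) (Fin (k + 1)) R := of fun i j =>
    if Even (i : ℕ) then b (2 * j - i + 1) else b (2 * j - i + 1) - c * b (2 * j - i + 2)
  have hrow : (hurwitzMatrix b (k + 1)).det = M.det := by
    refine det_eq_of_forall_row_eq_smul_add_pred (fun i => if Even (i : ℕ) then c else 0)
      (fun j => by simp [M, hurwitzMatrix, hurwitzRows]) fun i j => ?_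
    simp only [M, hurwitzMatrix, hurwitzRows, of_apply, Fin.val_succ, Fin.val_castSucc,
      Nat.even_add_one]
    split_ifs <;> push_cast <;> ring_nf
  have hcol : ∀ i : Fin k, M i.succ 0 = 0 := by
    intro i
    simp only [M, of_apply, Fin.val_succ, Fin.val_zero, Nat.even_iff]
    push_cast
    split_ifs with hi
    · exact hneg _ (by omega)
    · rcases Nat.eq_zero_or_pos (i : ℕ) with h0 | hpos
      · simp [h0, hc]
      · rw [hneg _ (by omega), hneg _ (by omega), mul_zero, sub_zero]
  rw [hrow, det_succ_column_zero, Fin.sum_univ_succ, Finset.sum_eq_zero fun i _ => by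
    rw [hcol, mul_zero, zero_mul]]
  simp only [Fin.val_zero, pow_zero, one_mul, add_zero]
  congr 2
  ext i j
  simp only [M, hurwitzMatrix, hurwitzRows, routhStep, submatrix_apply, of_apply,
    Fin.succAbove_zero, Fin.val_succ, Nat.even_iff, Int.even_iff]
  push_cast
  split_ifs <;> (try omega) <;> ring_nf

theorem det_hurwitzRows_eq_zero_of_not_injective (b : ℤ → R) {k : ℕ} {S : Fin k → ℤ}
    (hS : ¬ Function.Injective S) : (hurwitzRows b S).det = 0 := by
  obtain ⟨i, i', hii', hne⟩ := Function.not_injective_iff.mp hS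
  exact det_zero_of_row_eq hne (funext fun j => by simp [hurwitzRows, hii'])

theorem det_hurwitzRows_esymmSeq_cons (a : R) (s : Multiset R) {k : ℕ} (S : Fin k → ℤ) :
    (hurwitzRows (esymmSeq (a ::ₘ s)) S).det =
      ∑ t : Finset (Fin k), a ^ #tᶜ *
        (hurwitzRows (esymmSeq s) fun i => S i + if i ∈ t then 0 else 1).det := by
  have hrows : hurwitzRows (esymmSeq (a ::ₘ s)) S =
      of fun i => hurwitzRows (esymmSeq s) S i + a • hurwitzRows (esymmSeq s) (S · + 1) i := by
    ext i j
    simp only [hurwitzRows, of_apply, esymmSeq_cons, Pi.add_apply, Pi.smul_apply, smul_eq_mul]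
    ring_nf
  rw [hrows]
  refine (det_of_add_smul_rows _ _ a).trans (Finset.sum_congr rfl fun t _ => ?_)
  congr 2
  ext i j
  by_cases hi : i ∈ t <;> simp [hurwitzRows, hi]

theorem det_hurwitzRows_esymmSeq_zero {k : ℕ} {S : Fin k → ℤ} (hS : StrictMono S) :
    (hurwitzRows (esymmSeq (0 : Multiset R)) S).det = if ∀ i, S i = 2 * i + 1 then 1 else 0 := by
  split_ifs with hdiag
  · convert det_one (n := Fin k) (R := R)
    ext i j
    simp only [hurwitzRows, of_apply, esymmSeq_zero_left, hdiag, one_apply, Fin.ext_iff]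
    congr 1
    apply propext
    omega
  by_contra hdet
  -- every row has its single `1` in some column `c i`, and `c` is increasing, hence the identity
  have hcol : ∀ i, ∃ j : Fin k, S i = 2 * j + 1 := by
    intro i
    by_contra! hrow
    refine hdet (det_eq_zero_of_row_eq_zero i fun j => ?_)
    simp only [hurwitzRows, of_apply, esymmSeq_zero_left, ite_eq_right_iff]
    intro h
    exact absurd (by omega) (hrow j)
  choose c hc using hcol
  have hcmono : StrictMono c := fun i i' h => by
    have := hS h
    rw [hc, hc] at this
    exact Fin.lt_def.mpr (by omega)
  exact hdiag fun i => by rw [hc, hcmono.eq_id]; rfl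

end CommRing

section OrderedRing

variable {R : Type*} [CommRing R] [LinearOrder R] [IsStrictOrderedRing R]

theorem det_hurwitzRows_esymmSeq_nonneg {s : Multiset R} (hs : ∀ a ∈ s, 0 ≤ a) {k : ℕ}
    {S : Fin k → ℤ} (hS : StrictMono S) : 0 ≤ (hurwitzRows (esymmSeq s) S).det := by
  induction s using Multiset.induction_on generalizing S with
  | empty =>
    rw [det_hurwitzRows_esymmSeq_zero hS]
    split_ifs <;> norm_num
  | cons a s ih =>
    rw [det_hurwitzRows_esymmSeq_cons]
    refine Finset.sum_nonneg fun t _ => mul_nonneg (pow_nonneg (hs a (by simp)) _) ?_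
    have hmono := monotone_add_of_strictMono hS (δ := fun i => if i ∈ t then 0 else 1)
      fun i => by split_ifs <;> norm_num
    by_cases hinj : Function.Injective fun i => S i + if i ∈ t then 0 else 1
    · exact ih (fun b hb => hs b (by simp [hb])) (hmono.strictMono_of_injective hinj)
    · rw [det_hurwitzRows_eq_zero_of_not_injective _ hinj]

theorem det_hurwitzRows_esymmSeq_pos {s : Multiset R} (hs : ∀ a ∈ s, 0 < a) {k : ℕ}
    {S : Fin k → ℤ} (hS : StrictMono S) (hle : ∀ i, S i ≤ 2 * i + 1)
    (hcard : ∀ i, 2 * i + 1 - S i ≤ Multiset.card s) :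
    0 < (hurwitzRows (esymmSeq s) S).det := by
  induction s using Multiset.induction_on generalizing S with
  | empty =>
    rw [det_hurwitzRows_esymmSeq_zero hS, if_pos fun i => by
      have := hle i; have := hcard i; simp only [Multiset.card_zero, Nat.cast_zero] at this; omega]
    exact one_pos
  | cons a s ih =>
    have ha : 0 < a := hs a (by simp)
    have hs' : ∀ b ∈ s, 0 < b := fun b hb => hs b (by simp [hb])
    rw [det_hurwitzRows_esymmSeq_cons]
    -- the rows already in their final position `2 i + 1` stay, all others move down by one
    let t : Finset (Fin k) := {i | S i = 2 * i + 1}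
    have hmem : ∀ i, i ∈ t ↔ S i = 2 * i + 1 := by simp [t]
    refine Finset.sum_pos' (fun t' _ => mul_nonneg (pow_nonneg ha.le _) ?_)
      ⟨t, Finset.mem_univ _, mul_pos (pow_pos ha _) (ih hs' ?_ ?_ ?_)⟩
    · by_cases hinj : Function.Injective fun i => S i + if i ∈ t' then 0 else 1
      · exact det_hurwitzRows_esymmSeq_nonneg (fun b hb => (hs' b hb).le)
          ((monotone_add_of_strictMono hS fun i => by split_ifs <;> norm_num).strictMono_of_injective
            hinj)
      · rw [det_hurwitzRows_eq_zero_of_not_injective _ hinj]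
    · intro i i' hlt
      have := hS hlt
      have := hle i
      have := hle i'
      have : (i : ℤ) < i' := by exact_mod_cast hlt
      simp only [hmem]
      split_ifs <;> omega
    · intro i
      have := hle i
      simp only [hmem]
      split_ifs <;> omega
    · intro i
      have := hcard i
      simp only [Multiset.card_cons, Nat.cast_add, Nat.cast_one] at this
      simp only [hmem]
      split_ifs <;> omega

theorem det_hurwitzMatrix_esymmSeq_pos {s : Multiset R} (hs : ∀ a ∈ s, 0 < a) {k : ℕ}
    (hk : k ≤ Multiset.card s) : 0 < (hurwitzMatrix (esymmSeq s) k).det :=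
  det_hurwitzRows_esymmSeq_pos hs (fun i i' h => by simpa using h) (fun i => by omega)
    fun i => by have := i.isLt; omega

end OrderedRing

section OrderedField

variable {R : Type*} [Field R] [LinearOrder R] [IsStrictOrderedRing R]

theorem nonneg_of_det_hurwitzMatrix_pos {m : ℕ} {b : ℤ → R} (hneg : ∀ t < 0, b t = 0)
    (hgt : ∀ t, (m : ℤ) < t → b t = 0) (h0 : 0 < b 0)
    (hdet : ∀ k, 1 ≤ k → k ≤ m → 0 < (hurwitzMatrix b k).det) (t : ℤ) : 0 ≤ b t := by
  induction m generalizing b t with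
  | zero =>
    rcases lt_trichotomy t 0 with ht | rfl | ht
    · rw [hneg t ht]
    · exact h0.le
    · rw [hgt t (by omega)]
  | succ m ih =>
    have hb1 : 0 < b 1 := det_hurwitzMatrix_one b ▸ hdet 1 le_rfl (by omega)
    set c := b 0 / b 1
    have hc : b 0 = c * b 1 := (div_mul_cancel₀ _ hb1.ne').symm
    have hstep : ∀ t, 0 ≤ routhStep b c t := by
      refine ih (fun t ht => ?_) (fun t ht => ?_) (by simpa [routhStep] using hb1)
        (fun k hk hkm => ?_)
      · rcases Int.emod_two_eq_zero_or_one t with h | h <;>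
          simp only [routhStep, Int.even_iff, h, if_true, if_false, one_ne_zero]
        · exact hneg _ (by omega)
        · rcases (show t = -1 ∨ t ≤ -2 by omega) with rfl | ht'
          · norm_num [hc]
          · rw [hneg _ (by omega), hneg _ (by omega), mul_zero, sub_zero]
      · simp only [routhStep, hgt _ (show ((m + 1 : ℕ) : ℤ) < t + 1 by omega),
          hgt _ (show ((m + 1 : ℕ) : ℤ) < t + 2 by omega), mul_zero, sub_zero, ite_self]
      · have := hdet (k + 1) (by omega) (by omega)
        rw [det_hurwitzMatrix_succ hneg hc] at this
        exact pos_of_mul_pos_right this hb1.le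
    -- read back `b` from `routhStep b c`: odd entries directly, even ones as `b' + c * b(odd)`
    have hodd : ∀ t, t % 2 = 1 → 0 ≤ b t := fun t ht => by
      have := hstep (t - 1)
      rwa [routhStep, if_pos (Int.even_iff.mpr (by omega)), sub_add_cancel] at this
    rcases Int.emod_two_eq_zero_or_one t with ht | ht
    · rcases lt_trichotomy t 0 with hlt | rfl | hpos
      · rw [hneg t hlt]
      · exact h0.le
      · have := hstep (t - 1)
        rw [routhStep, if_neg (by rw [Int.even_iff]; omega), sub_add_cancel,
          show t - 1 + 2 = t + 1 by ring] at this
        nlinarith [hodd (t + 1) (by omega), div_pos h0 hb1]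
    · exact hodd t ht

theorem nonneg_of_det_hurwitzMatrix_esymmSeq_pos {s : Multiset R}
    (hdet : ∀ k, 1 ≤ k → k ≤ Multiset.card s → 0 < (hurwitzMatrix (esymmSeq s) k).det) :
    ∀ a ∈ s, 0 ≤ a := by
  have he : ∀ t, 0 ≤ esymmSeq s t := nonneg_of_det_hurwitzMatrix_pos (fun t => esymmSeq_of_neg s)
    (fun t => esymmSeq_of_card_lt) (by rw [esymmSeq_zero_right]; exact one_pos) hdet
  intro a ha
  by_contra! hneg
  -- `∏ (X + r)` has only nonnegative coefficients but vanishes at the positive point `-a`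
  have hroot : ((s.map fun r => X + C r).prod).eval (-a) = 0 := by
    rw [eval_multiset_prod, Multiset.prod_eq_zero_iff, Multiset.map_map]
    exact Multiset.mem_map.mpr ⟨a, ha, by simp⟩
  refine hroot.not_gt ?_
  rw [Multiset.prod_X_add_C_eq_sum_esymm, eval_finsetSum]
  have hterm : ∀ j ∈ range (Multiset.card s + 1),
      0 ≤ eval (-a) (C (s.esymm j) * X ^ (Multiset.card s - j)) := fun j _ => by
    simpa [esymmSeq] using mul_nonneg (he j) (pow_nonneg (neg_nonneg.mpr hneg.le) _)
  refine lt_of_lt_of_le ?_ (single_le_sum hterm (mem_range.mpr (Nat.succ_pos _)))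
  simpa [Multiset.esymm_zero_right] using pow_pos (neg_pos.mpr hneg) _

theorem forall_pos_iff_det_hurwitzMatrix_esymmSeq_pos {s : Multiset R} (hs : (0 : R) ∉ s) :
    (∀ a ∈ s, 0 < a) ↔
      ∀ k, 1 ≤ k → k ≤ Multiset.card s → 0 < (hurwitzMatrix (esymmSeq s) k).det :=
  ⟨fun hpos _ _ hk => det_hurwitzMatrix_esymmSeq_pos hpos hk, fun hdet a ha =>
    (nonneg_of_det_hurwitzMatrix_esymmSeq_pos hdet a ha).lt_of_ne fun h => hs (h ▸ ha)⟩

end OrderedField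

section Polynomial

variable {R : Type*} [CommRing R]

def hurwitzCoeff (p : R[X]) (t : ℤ) : R :=
  if 0 ≤ t ∧ t ≤ p.natDegree then p.coeff (p.natDegree - t.toNat) else 0

theorem hurwitzDet_eq (p : ℝ[X]) (k : ℕ) :
    hurwitzDet p k = (hurwitzMatrix (hurwitzCoeff p) k).det :=
  rfl

theorem hurwitzCoeff_X_pow_mul [Nontrivial R] (n : ℕ) {p : R[X]} (hp : p ≠ 0) (t : ℤ) :
    hurwitzCoeff (X ^ n * p) t = hurwitzCoeff p t := by
  simp only [hurwitzCoeff, natDegree_X_pow_mul (n := n) hp, coeff_X_pow_mul']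
  push_cast
  split_ifs <;> first | rfl | omega | (congr 1; omega)

theorem hurwitzCoeff_prod_X_sub_C [Nontrivial R] (s : Multiset R) (t : ℤ) :
    hurwitzCoeff (s.map (X - C ·)).prod t = (-1) ^ t.natAbs * esymmSeq s t := by
  rw [hurwitzCoeff, natDegree_multiset_prod_X_sub_C_eq_card]
  split_ifs with ht
  · rw [Multiset.prod_X_sub_C_coeff s (by omega), esymmSeq, if_pos ht.1,
      show Multiset.card s - (Multiset.card s - t.toNat) = t.toNat by omega,
      show t.natAbs = t.toNat by omega]
  · rcases not_and_or.mp ht with ht | ht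
    · rw [esymmSeq_of_neg s (by omega), mul_zero]
    · rw [esymmSeq_of_card_lt (by omega), mul_zero]

end Polynomial

theorem hurwitzDet_X_pow_mul_prod_X_sub_C (n : ℕ) (s : Multiset ℝ) (k : ℕ) :
    hurwitzDet (X ^ n * (s.map (X - C ·)).prod) k =
      (-1) ^ ((k + 1) / 2) * (hurwitzMatrix (esymmSeq s) k).det := by
  rw [hurwitzDet_eq, ← det_hurwitzMatrix_neg_one_pow_mul]
  congr 2
  ext t
  rw [hurwitzCoeff_X_pow_mul n (monic_multiset_prod_of_monic _ _ fun a _ => monic_X_sub_C a).ne_zero,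
    hurwitzCoeff_prod_X_sub_C]

theorem Matrix.IsHermitian.eq_prod_eigenvalues {n : Type*} [Fintype n] [DecidableEq n]
    {A : Matrix n n ℂ} (hA : A.IsHermitian) {q : ℝ[X]} (hq : q.map (algebraMap ℝ ℂ) = A.charpoly) :
    q = ((univ.val.map hA.eigenvalues).map (X - C ·)).prod := by
  refine Polynomial.map_injective _ (algebraMap ℝ ℂ).injective ?_
  rw [hq, hA.charpoly_eq, Polynomial.map_multiset_prod, Multiset.map_map, Multiset.map_map,
    Finset.prod_eq_multiset_prod]
  exact congrArg _ (Multiset.map_congr rfl fun i _ => by simp)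

theorem Matrix.IsHermitian.forall_dotProduct_mulVec_nonneg_iff {n : Type*} [Fintype n]
    [DecidableEq n] {A : Matrix n n ℂ} (hA : A.IsHermitian) :
    (∀ x : n → ℂ, 0 ≤ dotProduct (star x) (A.mulVec x)) ↔ ∀ i, 0 ≤ hA.eigenvalues i := by
  rw [← posSemidef_iff_dotProduct_mulVec.trans (and_iff_right hA),
    hA.posSemidef_iff_eigenvalues_nonneg, Pi.le_def]
  rfl

/-- **Characterization of positive operators.** A Hermitian complex matrix
`A`, whose characteristic polynomial is the real polynomial `q` (mapped into
`ℂ`) and where `n₀` is the multiplicity of `0` as a root, is positive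
semidefinite iff `(-1)^⌈k/2⌉ Δ_k > 0` for all `k = 1, …, n - n₀`, where `Δ_k`
are the Hurwitz determinants of the characteristic polynomial. -/
theorem posSemidef_iff_hurwitz
    (n n₀ : ℕ) (A : Matrix (Fin n) (Fin n) ℂ) (hA : A.IsHermitian)
    (q : Polynomial ℝ) (hq : q.map (algebraMap ℝ ℂ) = A.charpoly)
    (hmult : q.rootMultiplicity 0 = n₀) :
    (∀ x : Fin n → ℂ, 0 ≤ dotProduct (star x) (A.mulVec x)) ↔
      (∀ k : ℕ, 1 ≤ k → k ≤ n - n₀ →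
        0 < (-1 : ℝ) ^ ((k + 1) / 2) * hurwitzDet q k) := by
  classical
  set s := univ.val.map hA.eigenvalues
  have hqs : q = (s.map (X - C ·)).prod := hA.eq_prod_eigenvalues hq
  have hn₀ : s.count 0 = n₀ := by
    rw [← hmult, ← count_roots, hqs, roots_multiset_prod_X_sub_C]
  have hcard : Multiset.card (s.filter (· ≠ 0)) = n - n₀ := by
    have := s.count_add_card_filter_ne 0
    simp only [hn₀, s, Multiset.card_map, card_val, card_univ, Fintype.card_fin] at this ⊢
    omega
  have hdet : ∀ k, (-1 : ℝ) ^ ((k + 1) / 2) * hurwitzDet q k =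
      (hurwitzMatrix (esymmSeq (s.filter (· ≠ 0))) k).det := fun k => by
    rw [hqs, Multiset.prod_X_sub_C_eq_X_pow_count_mul, hurwitzDet_X_pow_mul_prod_X_sub_C,
      ← mul_assoc, ← pow_add, ← two_mul, pow_mul, neg_one_sq, one_pow, one_mul]
  have hpsd : (∀ i, 0 ≤ hA.eigenvalues i) ↔ ∀ a ∈ s, 0 ≤ a := by simp [s]
  rw [hA.forall_dotProduct_mulVec_nonneg_iff, hpsd,
    Multiset.forall_nonneg_iff_forall_filter_ne_zero_pos,
    forall_pos_iff_det_hurwitzMatrix_esymmSeq_pos (by simp), hcard]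
  simp_rw [hdet]
end

section
/- Let A be a 3×3 Hermitian complex matrix with det(A) ≠ 0, and write t = tr(A), s = tr(A²), d = det(A), all real numbers. Then A is positive semidefinite if and only if the following three conditions hold: t > 0, and (1/2)·t·(t² − s) − d > 0, and ( (1/2)·t·(t² − s) − d )·d > 0. -/
/-!
Diagonalise `A`: its eigenvalues `a, b, c` are real, with `t = a + b + c`, `s = a² + b² + c²`
and `d = abc`, and `A` is positive semidefinite iff `a, b, c ≥ 0`. In terms of the elementary
symmetric functions `e₁ = t`, `e₂ = ab + bc + ca`, `e₃ = d`, the middle Hurwitz determinant is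
`e₁e₂ - e₃ = (a + b)(b + c)(c + a)`, so the three conditions hold when `a, b, c > 0`.
Conversely they force `e₁, e₂, e₃ > 0`, and a real cubic `(z - a)(z - b)(z - c)` whose
coefficients alternate strictly in sign has no root `≤ 0`.
-/

open ComplexOrder

namespace Matrix.IsHermitian

variable {𝕜 n : Type*} [RCLike 𝕜] [Fintype n] [DecidableEq n] {A : Matrix n n 𝕜}

theorem trace_pow_eq_sum_eigenvalues_pow (hA : A.IsHermitian) (k : ℕ) :
    (A ^ k).trace = ∑ i, (hA.eigenvalues i : 𝕜) ^ k := by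
  conv_lhs => rw [hA.spectral_theorem, ← map_pow, diagonal_pow, Unitary.conjStarAlgAut_apply,
    trace_mul_cycle, Unitary.coe_star_mul_self, one_mul, trace_diagonal]
  simp

theorem forall_dotProduct_mulVec_nonneg_iff_s15 (hA : A.IsHermitian) :
    (∀ x, 0 ≤ star x ⬝ᵥ (A *ᵥ x)) ↔ 0 ≤ hA.eigenvalues := by
  rw [← hA.posSemidef_iff_eigenvalues_nonneg, posSemidef_iff_dotProduct_mulVec, and_iff_right hA]

end Matrix.IsHermitian

section ThreeVariables

variable {K : Type*} [Field K] [LinearOrder K] [IsStrictOrderedRing K]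

theorem pos_of_elementarySymmetric_pos {a b c : K} (h₁ : 0 < a + b + c)
    (h₂ : 0 < a * b + b * c + c * a) (h₃ : 0 < a * b * c) : 0 < a := by
  by_contra! ha
  have hbc : b * c < 0 := by nlinarith
  have ha_bc : a * (b + c) ≤ 0 := mul_nonpos_of_nonpos_of_nonneg ha (by linarith)
  linarith

theorem nonneg_iff_routhHurwitz {a b c t s d : K} (ht : t = a + b + c)
    (hs : s = a ^ 2 + b ^ 2 + c ^ 2) (hd : d = a * b * c) (hd₀ : d ≠ 0) :
    (0 ≤ a ∧ 0 ≤ b ∧ 0 ≤ c) ↔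
      (0 < t ∧ 0 < (1 / 2) * t * (t ^ 2 - s) - d ∧ 0 < ((1 / 2) * t * (t ^ 2 - s) - d) * d) := by
  subst ht hs hd
  have hΔ₂ : (1 / 2) * (a + b + c) * ((a + b + c) ^ 2 - (a ^ 2 + b ^ 2 + c ^ 2)) - a * b * c =
      (a + b) * (b + c) * (c + a) := by ring
  rw [hΔ₂]
  constructor
  · rintro ⟨ha, hb, hc⟩
    obtain ⟨⟨ha₀, hb₀⟩, hc₀⟩ : (a ≠ 0 ∧ b ≠ 0) ∧ c ≠ 0 := by simpa only [mul_ne_zero_iff] using hd₀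
    have ha' := ha.lt_of_ne' ha₀
    have hb' := hb.lt_of_ne' hb₀
    have hc' := hc.lt_of_ne' hc₀
    exact ⟨by positivity, by positivity, by positivity⟩
  · rintro ⟨h₁, hΔ, hΔd⟩
    have h₃ : 0 < a * b * c := pos_of_mul_pos_right hΔd hΔ.le
    have h₂ : 0 < a * b + b * c + c * a := by nlinarith
    refine ⟨(pos_of_elementarySymmetric_pos h₁ h₂ h₃).le, ?_, ?_⟩
    · exact (pos_of_elementarySymmetric_pos (a := b) (b := c) (c := a)
        (by linarith) (by linarith) (by linarith)).le
    · exact (pos_of_elementarySymmetric_pos (a := c) (b := a) (c := b)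
        (by linarith) (by linarith) (by linarith)).le

end ThreeVariables

/-- A `3 × 3` Hermitian complex matrix `A` with `det A ≠ 0`, writing
`t = tr A`, `s = tr A²`, `d = det A` (all real), is positive semidefinite iff
`t > 0`, `(1/2) t (t² - s) - d > 0` and `((1/2) t (t² - s) - d) d > 0`. -/
theorem posSemidef_three_dim_iff
    (A : Matrix (Fin 3) (Fin 3) ℂ) (hA : A.IsHermitian)
    (t s d : ℝ) (ht : (t : ℂ) = A.trace) (hs : (s : ℂ) = (A ^ 2).trace)
    (hd : (d : ℂ) = A.det) (hdet : d ≠ 0) :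
    (∀ x : Fin 3 → ℂ, 0 ≤ dotProduct (star x) (A.mulVec x)) ↔
      (0 < t ∧
        0 < (1 / 2) * t * (t ^ 2 - s) - d ∧
        0 < ((1 / 2) * t * (t ^ 2 - s) - d) * d) := by
  have ht' : t = hA.eigenvalues 0 + hA.eigenvalues 1 + hA.eigenvalues 2 := by
    rw [hA.trace_eq_sum_eigenvalues, Fin.sum_univ_three,
      ← RCLike.ofReal_eq_complex_ofReal] at ht
    exact_mod_cast ht
  have hs' : s = hA.eigenvalues 0 ^ 2 + hA.eigenvalues 1 ^ 2 + hA.eigenvalues 2 ^ 2 := by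
    rw [hA.trace_pow_eq_sum_eigenvalues_pow, Fin.sum_univ_three,
      ← RCLike.ofReal_eq_complex_ofReal] at hs
    exact_mod_cast hs
  have hd' : d = hA.eigenvalues 0 * hA.eigenvalues 1 * hA.eigenvalues 2 := by
    rw [hA.det_eq_prod_eigenvalues, Fin.prod_univ_three,
      ← RCLike.ofReal_eq_complex_ofReal] at hd
    exact_mod_cast hd
  rw [hA.forall_dotProduct_mulVec_nonneg_iff_s15, Pi.le_def]
  simp only [Fin.forall_fin_succ, IsEmpty.forall_iff, and_true]
  exact nonneg_iff_routhHurwitz ht' hs' hd' hdet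
end
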